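/- Let f(x,y) = x·φ(y) + h(y) on F₂^(m-1) × F₂^(m+1) where the preimages φ⁻¹(a) are (not necessarily affine) 4-element sets partitioning F₂^(m+1). Then for every (a,b) ∈ F₂^(m-1) × F₂^(m+1), the Walsh coefficient W_f(a,b) lies in {0, ±2^m, ±2^{m+1}}; consequently f is bent, semi-bent, or has 5-valued Walsh spectrum {0, ±2^m, ±2^{m+1}}. -/

import Mathlib

/-!
Since `f` is linear in `x`, summing `(-1)^{f(x,y) + a·x + b·y}` over `x` gives `2^{m-1}` when
`φ(y) = a` and `0` otherwise, so `W_f(a,b) = 2^{m-1} Σ_{y ∈ φ⁻¹(a)} (-1)^{h(y) + b·y}`. The inner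
sum has four terms `±1`, hence equals `4 - 2k` with `0 ≤ k ≤ 4` the number of `-1`s.
-/

open Finset

/-- Dot product on `F₂^k`. -/
def dotp {k : ℕ} (x y : Fin k → ZMod 2) : ZMod 2 := ∑ i, x i * y i

/-- The character `z ↦ (-1)^z`. -/
def chr (z : ZMod 2) : ℤ := (-1 : ℤ) ^ z.val

/-- Walsh–Hadamard transform of a Boolean function on `F₂^p × F₂^q`. -/
def walshP {p q : ℕ} (f : (Fin p → ZMod 2) × (Fin q → ZMod 2) → ZMod 2)
    (a : Fin p → ZMod 2) (b : Fin q → ZMod 2) : ℤ :=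
  ∑ x : Fin p → ZMod 2, ∑ y : Fin q → ZMod 2, chr (f (x, y) + dotp a x + dotp b y)

/-- `S` is a 2-dimensional affine subspace (flat) of `F₂^k`. -/
def Is2Flat {k : ℕ} (S : Set (Fin k → ZMod 2)) : Prop :=
  ∃ (c : Fin k → ZMod 2) (W : Submodule (ZMod 2) (Fin k → ZMod 2)),
    Module.finrank (ZMod 2) ↥W = 2 ∧ S = (fun w => c + w) '' (W : Set (Fin k → ZMod 2))

lemma chr_add (a b : ZMod 2) : chr (a + b) = chr a * chr b := by revert a b; decide

lemma chr_sum {ι : Type*} (s : Finset ι) (g : ι → ZMod 2) :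
    chr (∑ i ∈ s, g i) = ∏ i ∈ s, chr (g i) := by
  classical
  induction s using Finset.induction_on with
  | empty => rfl
  | insert i s hi ih => rw [sum_insert hi, prod_insert hi, chr_add, ih]

lemma chr_eq_one_sub_two_mul_ite (z : ZMod 2) : chr z = 1 - 2 * if z = 1 then 1 else 0 := by
  revert z; decide

lemma sum_chr_eq_card_sub_two_mul_card_filter {ι : Type*} (s : Finset ι) (g : ι → ZMod 2) :
    ∑ i ∈ s, chr (g i) = #s - 2 * #(s.filter fun i => g i = 1) := by
  simp only [chr_eq_one_sub_two_mul_ite, sum_sub_distrib, ← mul_sum, sum_boole, sum_const,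
    nsmul_one]

lemma dotp_add_right {k : ℕ} (x a b : Fin k → ZMod 2) :
    dotp x (a + b) = dotp x a + dotp x b := by
  simp only [dotp, Pi.add_apply, mul_add, sum_add_distrib]

lemma dotp_comm {k : ℕ} (x y : Fin k → ZMod 2) : dotp x y = dotp y x := by
  simp only [dotp, mul_comm]

lemma sum_chr_mul (c : ZMod 2) : ∑ t : ZMod 2, chr (t * c) = if c = 0 then 2 else 0 := by
  revert c; decide

lemma sum_chr_dotp {k : ℕ} (c : Fin k → ZMod 2) :
    ∑ x : Fin k → ZMod 2, chr (dotp x c) = if c = 0 then 2 ^ k else 0 := by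
  calc ∑ x : Fin k → ZMod 2, chr (dotp x c)
      = ∏ i, ∑ t : ZMod 2, chr (t * c i) := by
        simp only [dotp, chr_sum, Fintype.prod_sum]
    _ = if c = 0 then 2 ^ k else 0 := by
        simp [sum_chr_mul, prod_ite_zero, funext_iff]

lemma walshP_eq_two_pow_mul_sum_fiber {p q : ℕ} {φ : (Fin q → ZMod 2) → (Fin p → ZMod 2)}
    {h : (Fin q → ZMod 2) → ZMod 2} {f : (Fin p → ZMod 2) × (Fin q → ZMod 2) → ZMod 2}
    (hf : ∀ x y, f (x, y) = dotp x (φ y) + h y) (a : Fin p → ZMod 2) (b : Fin q → ZMod 2) :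
    walshP f a b = 2 ^ p * ∑ y ∈ univ.filter fun y => φ y = a, chr (h y + dotp b y) := by
  have hx : ∀ y, ∑ x, chr (f (x, y) + dotp a x + dotp b y)
      = (if φ y = a then 2 ^ p else 0) * chr (h y + dotp b y) := by
    intro y
    have hsplit : ∀ x, f (x, y) + dotp a x + dotp b y = dotp x (φ y + a) + (h y + dotp b y) := by
      intro x
      rw [hf, dotp_add_right, dotp_comm a x]
      ring
    have hfiber : φ y + a = 0 ↔ φ y = a := by
      rw [add_eq_zero_iff_eq_neg, ZModModule.neg_eq_self]
    simp only [hsplit, chr_add, ← sum_mul, sum_chr_dotp, hfiber]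
  rw [walshP, sum_comm, mul_sum, sum_filter]
  exact sum_congr rfl fun y _ => by rw [hx]; split_ifs <;> ring

/-- if the preimages of a 4-to-1 map `φ` partition `F₂^{m+1}` into
4-element sets, then all Walsh coefficients of `f(x,y) = x·φ(y) + h(y)` lie in
`{0, ±2^m, ±2^{m+1}}` (so `f` is bent, semi-bent, or 5-valued). -/
theorem walsh_values_of_four_to_one {m : ℕ}
    (φ : (Fin (m + 1) → ZMod 2) → (Fin (m - 1) → ZMod 2))
    (h : (Fin (m + 1) → ZMod 2) → ZMod 2)
    (f : (Fin (m - 1) → ZMod 2) × (Fin (m + 1) → ZMod 2) → ZMod 2)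
    (hf : ∀ x y, f (x, y) = dotp x (φ y) + h y)
    (h4 : ∀ a, ((Finset.univ.filter fun y => φ y = a)).card = 4) :
    ∀ a b, walshP f a b ∈
      ({0, 2 ^ m, -(2 ^ m), 2 ^ (m + 1), -(2 ^ (m + 1))} : Set ℤ) := by
  intro a b
  obtain ⟨n, rfl⟩ : ∃ n, m = n + 1 := Nat.exists_eq_add_one_of_ne_zero <| by
    rintro rfl
    have := card_filter_le univ fun y => φ y = 0
    simp [h4] at this
  set odd := (univ.filter fun y => φ y = a).filter fun y => h y + dotp b y = 1
  have hodd : #odd ≤ 4 := h4 a ▸ card_filter_le _ _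
  rw [walshP_eq_two_pow_mul_sum_fiber hf, sum_chr_eq_card_sub_two_mul_card_filter, h4 a,
    show (2 : ℤ) ^ (n + 1) = 2 ^ n * 2 by ring, show (2 : ℤ) ^ (n + 1 + 1) = 2 ^ n * 4 by ring]
  simp only [Nat.add_sub_cancel]
  interval_cases #odd <;> norm_num
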